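/- Let 𝒜, ℬ be nondegenerate hierarchies over a finite set S with |S| ≥ 2, and let {S_L, S_R} be the two children of the root cluster S in ℬ. Then Σ_{I∈𝒜, J∈ℬ} θ(η_{𝒜,ℬ}(I,J)) = Σ_{I∈𝒜} θ( #{A ∈ children(I,𝒜) : A is incompatible with {S_L, S_R}} ) + Σ_{I∈𝒜|_{S_L}, J∈ℬ|_{S_L}} θ(η_{𝒜|_{S_L}, ℬ|_{S_L}}(I,J)) + Σ_{I∈𝒜|_{S_R}, J∈ℬ|_{S_R}} θ(η_{𝒜|_{S_R}, ℬ|_{S_R}}(I,J)), where the sums over restrictions to a singleton block are taken to be 0. (This is the recursion satisfied by the closed form of the NNI navigation distance.) -/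

import Mathlib

open scoped Classical

namespace TreeDist

variable {α : Type*} [DecidableEq α]

/-- Two finite sets are compatible if they are disjoint or nested. -/
def Compatible (A B : Finset α) : Prop :=
  A ∩ B = ∅ ∨ A ⊆ B ∨ B ⊆ A

/-- A hierarchy over `S`: a laminar family of nonempty subsets of `S`
containing `S` and all singletons. -/
def IsHierarchy (S : Finset α) (F : Finset (Finset α)) : Prop :=
  (∀ A ∈ F, A ⊆ S ∧ A.Nonempty) ∧
  (∀ A ∈ F, ∀ B ∈ F, Compatible A B) ∧
  S ∈ F ∧ ∀ i ∈ S, ({i} : Finset α) ∈ F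

/-- A nondegenerate (binary) hierarchy: a hierarchy with `2|S| - 1` clusters,
equivalently a maximal laminar family. -/
def Nondeg (S : Finset α) (F : Finset (Finset α)) : Prop :=
  IsHierarchy S F ∧ F.card = 2 * S.card - 1

/-- `P` is the parent of `I` in the family `F`: the smallest cluster of `F`
strictly containing `I`. -/
def IsParent (F : Finset (Finset α)) (I P : Finset α) : Prop :=
  P ∈ F ∧ I ⊂ P ∧ ∀ Q ∈ F, I ⊂ Q → P ⊆ Q

/-- `G` is the result of an NNI move on `F` at some grandchild `C`:
`G = (F \ {parent C}) ∪ {grandparent C \ C}`. -/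
def IsNNIMove (F G : Finset (Finset α)) : Prop :=
  ∃ C P GP, C ∈ F ∧ IsParent F C P ∧ IsParent F P GP ∧
    G = insert (GP \ C) (F.erase P)

/-- Restriction of a family of sets to `K`: `{A ∩ K : A ∈ F, A ∩ K ≠ ∅}`. -/
noncomputable def restrictFam (F : Finset (Finset α)) (K : Finset α) : Finset (Finset α) :=
  (F.image (· ∩ K)).filter fun A => A.Nonempty

/-- The cardinality of the smallest common ancestor of `i` and `j` in `F`, i.e. the
minimum cardinality of a cluster of `F` containing both `i` and `j`. -/
noncomputable def caCard (F : Finset (Finset α)) (i j : α) : ℕ :=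
  sInf {n | ∃ A ∈ F, i ∈ A ∧ j ∈ A ∧ A.card = n}

/-- Ultrametric representation `U(F)_{ij} = |ca(i,j)| - 1`. -/
noncomputable def Umat (F : Finset (Finset α)) (i j : α) : ℤ :=
  (caCard F i j : ℤ) - 1

/-- Cluster-cardinality distance `d_CC = (1/2) Σ_{i,j ∈ S} |U(F)_{ij} - U(G)_{ij}|`. -/
noncomputable def dCC (S : Finset α) (F G : Finset (Finset α)) : ℚ :=
  (1 / 2) * ∑ i ∈ S, ∑ j ∈ S, |((Umat F i j : ℚ)) - ((Umat G i j : ℚ))|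

/-- Robinson–Foulds distance: half the size of the symmetric difference of cluster sets. -/
noncomputable def dRF (F G : Finset (Finset α)) : ℚ :=
  (((F \ G) ∪ (G \ F)).card : ℚ) / 2

/-- Crossing dissimilarity: the number of incompatible pairs of clusters. -/
noncomputable def dCM (F G : Finset (Finset α)) : ℕ :=
  ((F ×ˢ G).filter fun p => ¬ Compatible p.1 p.2).card

/-- Depth of a cluster: the number of its strict ancestors in `F`. -/
noncomputable def depth (F : Finset (Finset α)) (I : Finset α) : ℕ :=
  (F.filter fun J => I ⊂ J).card

/-- The children of `I` in `F`: the clusters of `F` whose parent is `I`. -/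
noncomputable def children (F : Finset (Finset α)) (I : Finset α) : Finset (Finset α) :=
  F.filter fun C => IsParent F C I

/-- `η_{F,G}(I,J)`: the number of members of `(children I)|_J` incompatible with
the family `(children J)|_I`. -/
noncomputable def eta (F G : Finset (Finset α)) (I J : Finset α) : ℕ :=
  ((restrictFam (children F I) J).filter
    fun A => ∃ B ∈ restrictFam (children G J) I, ¬ Compatible A B).card

/-- `θ(x) = (x² + x)/2`. -/
def theta (x : ℕ) : ℚ := ((x : ℚ) ^ 2 + x) / 2

/-- Closed-form NNI navigation distance `d_Nav(F,G) = Σ_{I∈F, J∈G} θ(η_{F,G}(I,J))`. -/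
noncomputable def dNav (F G : Finset (Finset α)) : ℚ :=
  ∑ I ∈ F, ∑ J ∈ G, theta (eta F G I J)


end TreeDist

/-!
Split the sum over `J ∈ G` into `J = S` and the clusters below `SL` or below `SR`.
For `J = S`, a child `A` of `I` crosses one of the traces `SL ∩ I`, `SR ∩ I` exactly when
it meets both `SL` and `SR`, i.e. when it crosses `SL` or `SR`.
For `J ⊆ M` with `M ∈ {SL, SR}`, `η(I, J)` vanishes unless `I` is the least cluster of `F`
with its (nonempty) trace `I ∩ M`. For such `I` the children of `I ∩ M` in `F|_M` are the
traces of the children of `I`, so `η(I, J) = η_{F|_M, G|_M}(I ∩ M, J)`, and `I ↦ I ∩ M` is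
a bijection from these clusters onto `F|_M`.
-/

namespace TreeDist

open Finset

variable {α : Type*}

lemma theta_zero : theta 0 = 0 := by simp [theta]

section Children

variable {F : Finset (Finset α)} {I C : Finset α}

lemma mem_children : C ∈ children F I ↔ C ∈ F ∧ IsParent F C I := by
  simp [children]

lemma mem_of_mem_children (h : C ∈ children F I) : C ∈ F :=
  (mem_children.1 h).1

lemma ssubset_of_mem_children (h : C ∈ children F I) : C ⊂ I :=
  (mem_children.1 h).2.2.1

end Children

variable [DecidableEq α]

def Laminar (F : Finset (Finset α)) : Prop :=
  ∀ A ∈ F, ∀ B ∈ F, Compatible A B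

lemma IsHierarchy.laminar {S : Finset α} {F : Finset (Finset α)} (h : IsHierarchy S F) :
    Laminar F :=
  h.2.1

lemma Compatible.subset_or_subset {A B : Finset α} (h : Compatible A B)
    (hAB : (A ∩ B).Nonempty) : A ⊆ B ∨ B ⊆ A :=
  h.resolve_left hAB.ne_empty

lemma not_compatible_or_not_compatible_iff {A X Y : Finset α} (hXY : X ∩ Y = ∅)
    (hA : A ⊆ X ∪ Y) (hXYA : ¬ X ∪ Y ⊆ A) :
    (¬ Compatible A X ∨ ¬ Compatible A Y) ↔ (A ∩ X).Nonempty ∧ (A ∩ Y).Nonempty := by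
  have not_subset_of_meets {Z W : Finset α} (hZW : Z ∩ W = ∅) :
      (A ∩ W).Nonempty → ¬ A ⊆ Z := by
    rintro ⟨x, hx⟩ hAZ
    rw [mem_inter] at hx
    simpa [hZW] using mem_inter.2 ⟨hAZ hx.1, hx.2⟩
  have meets_of_not_subset {Z W : Finset α} (hZW : A ⊆ Z ∪ W) :
      ¬ A ⊆ Z → (A ∩ W).Nonempty := by
    intro hAZ
    obtain ⟨x, hxA, hxZ⟩ := not_subset.1 hAZ
    exact ⟨x, mem_inter.2 ⟨hxA, (mem_union.1 (hZW hxA)).resolve_left hxZ⟩⟩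
  constructor
  · rintro (h | h) <;> simp only [Compatible, not_or] at h
    · exact ⟨nonempty_iff_ne_empty.2 h.1, meets_of_not_subset hA h.2.1⟩
    · exact ⟨meets_of_not_subset (union_comm X Y ▸ hA) h.2.1, nonempty_iff_ne_empty.2 h.1⟩
  · rintro ⟨hAX, hAY⟩
    by_cases hXA : X ⊆ A
    · refine Or.inr fun h => h.elim hAY.ne_empty (Or.elim · ?_ fun hYA => ?_)
      exacts [not_subset_of_meets (inter_comm X Y ▸ hXY) hAX, hXYA (union_subset hXA hYA)]
    · exact Or.inl fun h => h.elim hAX.ne_empty (Or.elim · (not_subset_of_meets hXY hAY) hXA)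

section Restriction

variable {F : Finset (Finset α)}

lemma mem_restrictFam {K X : Finset α} :
    X ∈ restrictFam F K ↔ (∃ A ∈ F, A ∩ K = X) ∧ X.Nonempty := by
  simp [restrictFam]

lemma restrictFam_restrictFam {K J : Finset α} (h : J ⊆ K) :
    restrictFam (restrictFam F K) J = restrictFam F J := by
  have hKJ (A : Finset α) : A ∩ K ∩ J = A ∩ J := by rw [inter_assoc, inter_eq_right.2 h]
  ext X
  simp only [mem_restrictFam]
  constructor
  · rintro ⟨⟨_, ⟨⟨A, hA, rfl⟩, -⟩, rfl⟩, hne⟩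
    exact ⟨⟨A, hA, (hKJ A).symm⟩, hKJ A ▸ hne⟩
  · rintro ⟨⟨A, hA, rfl⟩, hne⟩
    refine ⟨⟨A ∩ K, ⟨⟨A, hA, rfl⟩, ?_⟩, hKJ A⟩, hne⟩
    exact hne.mono (inter_subset_inter_left h)

lemma restrictFam_eq_self {K : Finset α} (h : ∀ A ∈ F, A ⊆ K ∧ A.Nonempty) :
    restrictFam F K = F := by
  ext X
  simp only [mem_restrictFam]
  constructor
  · rintro ⟨⟨A, hA, rfl⟩, -⟩
    rwa [inter_eq_left.2 (h A hA).1]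
  · intro hX
    exact ⟨⟨X, hX, inter_eq_left.2 (h X hX).1⟩, (h X hX).2⟩

lemma restrictFam_inter_of_subset {M I : Finset α} (h : ∀ A ∈ F, A ⊆ M) :
    restrictFam F (I ∩ M) = restrictFam F I := by
  unfold restrictFam
  congr 1
  refine image_congr fun A hA => ?_
  rw [inter_comm I M, ← inter_assoc, inter_eq_left.2 (h A hA)]

lemma Laminar.restrictFam_eq_filter_subset (hF : Laminar F) (hne : ∀ A ∈ F, A.Nonempty)
    {M : Finset α} (hM : M ∈ F) : restrictFam F M = {A ∈ F | A ⊆ M} := by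
  ext X
  simp only [mem_restrictFam, mem_filter]
  constructor
  · rintro ⟨⟨A, hA, rfl⟩, hAM⟩
    rcases (hF A hA M hM).subset_or_subset hAM with h | h
    · rw [inter_eq_left.2 h]
      exact ⟨hA, h⟩
    · rw [inter_eq_right.2 h]
      exact ⟨hM, subset_rfl⟩
  · rintro ⟨hX, hXM⟩
    exact ⟨⟨X, hX, inter_eq_left.2 hXM⟩, hne X hX⟩

lemma exists_mem_restrictFam_not_compatible_iff {A I : Finset α} :
    (∃ B ∈ restrictFam F I, ¬ Compatible A B) ↔ ∃ B ∈ F, ¬ Compatible A (B ∩ I) := by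
  constructor
  · rintro ⟨_, hX, h⟩
    obtain ⟨⟨B, hB, rfl⟩, -⟩ := mem_restrictFam.1 hX
    exact ⟨B, hB, h⟩
  · rintro ⟨B, hB, h⟩
    have hBI : (B ∩ I).Nonempty := by
      by_contra hBI
      exact h (Or.inl (by rw [not_nonempty_iff_eq_empty.1 hBI, inter_empty]))
    exact ⟨B ∩ I, mem_restrictFam.2 ⟨⟨B, hB, rfl⟩, hBI⟩, h⟩

end Restriction

section Laminar

variable {F : Finset (Finset α)}

lemma Laminar.exists_mem_children_superset (hF : Laminar F) {K I : Finset α} (hK : K ∈ F)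
    (hKne : K.Nonempty) (hI : I ∈ F) (hKI : K ⊂ I) : ∃ A ∈ children F I, K ⊆ A := by
  obtain ⟨A, hAT, hmax⟩ := ({Q ∈ F | K ⊆ Q ∧ Q ⊂ I}).exists_max_image card
    ⟨K, mem_filter.2 ⟨hK, subset_rfl, hKI⟩⟩
  obtain ⟨hA, hKA, hAI⟩ := mem_filter.1 hAT
  refine ⟨A, mem_children.2 ⟨hA, hI, hAI, fun Q hQ hAQ => ?_⟩, hKA⟩
  have hKQ : K ⊆ Q := hKA.trans hAQ.subset
  obtain ⟨x, hx⟩ := hKne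
  rcases (hF Q hQ I hI).subset_or_subset ⟨x, mem_inter.2 ⟨hKQ hx, hKI.subset hx⟩⟩
    with hQI | hIQ
  · obtain hQI | rfl := hQI.ssubset_or_eq
    · have := hmax Q (mem_filter.2 ⟨hQ, hKQ, hQI⟩)
      have := card_lt_card hAQ
      omega
    · exact subset_rfl
  · exact hIQ

lemma Laminar.inter_eq_empty_of_mem_children (hF : Laminar F) {I A B : Finset α}
    (hA : A ∈ children F I) (hB : B ∈ children F I) (hAB : A ≠ B) : A ∩ B = ∅ := by
  have eq_of_subset {X Y : Finset α} (hX : X ∈ children F I) (hY : Y ∈ children F I)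
      (hXY : X ⊆ Y) : X = Y := by
    by_contra hne
    exact (ssubset_of_mem_children hY).not_subset
      ((mem_children.1 hX).2.2.2 Y (mem_of_mem_children hY) (hXY.ssubset_of_ne hne))
  rcases hF A (mem_of_mem_children hA) B (mem_of_mem_children hB) with h | h | h
  exacts [h, absurd (eq_of_subset hA hB h) hAB, absurd (eq_of_subset hB hA h).symm hAB]

end Laminar

/-- The clusters `I` of `F` with this property correspond bijectively to the members `I ∩ M`
of `restrictFam F M` (when `F` is laminar). -/
def IsLeastWithTrace (F : Finset (Finset α)) (M I : Finset α) : Prop :=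
  (I ∩ M).Nonempty ∧ ∀ K ∈ F, K ∩ M = I ∩ M → I ⊆ K

section Trace

variable {F : Finset (Finset α)} {M : Finset α}

lemma IsLeastWithTrace.inter_ssubset_inter {I A : Finset α} (hI : IsLeastWithTrace F M I)
    (hA : A ∈ F) (hAI : A ⊂ I) : A ∩ M ⊂ I ∩ M :=
  (inter_subset_inter_right hAI.subset).ssubset_of_ne fun h => hAI.not_subset (hI.2 A hA h)

lemma Laminar.exists_isLeastWithTrace (hF : Laminar F) {X : Finset α}
    (hX : X ∈ restrictFam F M) : ∃ I ∈ F, I ∩ M = X ∧ IsLeastWithTrace F M I := by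
  obtain ⟨⟨A, hA, hAM⟩, hXne⟩ := mem_restrictFam.1 hX
  obtain ⟨I, hIT, hmin⟩ :=
    ({K ∈ F | K ∩ M = X}).exists_min_image card ⟨A, mem_filter.2 ⟨hA, hAM⟩⟩
  obtain ⟨hI, hIM⟩ := mem_filter.1 hIT
  refine ⟨I, hI, hIM, hIM ▸ hXne, fun K hK hKM => ?_⟩
  have hX : X ⊆ I ∩ K :=
    subset_inter (hIM ▸ inter_subset_left) (hKM.trans hIM ▸ inter_subset_left)
  rcases (hF I hI K hK).subset_or_subset (hXne.mono hX) with hIK | hKI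
  · exact hIK
  · rw [eq_of_subset_of_card_le hKI (hmin K (mem_filter.2 ⟨hK, hKM.trans hIM⟩))]

lemma Laminar.sum_restrictFam {β : Type*} [AddCommMonoid β] (hF : Laminar F)
    (f : Finset α → β) :
    ∑ X ∈ restrictFam F M, f X = ∑ I ∈ F with IsLeastWithTrace F M I, f (I ∩ M) := by
  refine (sum_nbij (· ∩ M) (fun I hI => ?_) (fun I₁ hI₁ I₂ hI₂ h => ?_) (fun X hX => ?_)
    fun _ _ => rfl).symm
  · obtain ⟨hI, hne, -⟩ := mem_filter.1 hI
    exact mem_restrictFam.2 ⟨⟨I, hI, rfl⟩, hne⟩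
  · obtain ⟨hI₁, -, hmin₁⟩ := mem_filter.1 hI₁
    obtain ⟨hI₂, -, hmin₂⟩ := mem_filter.1 hI₂
    exact (hmin₁ I₂ hI₂ h.symm).antisymm (hmin₂ I₁ hI₁ h)
  · obtain ⟨I, hI, hIM, hmin⟩ := hF.exists_isLeastWithTrace hX
    exact ⟨I, mem_filter.2 ⟨hI, hmin⟩, hIM⟩

lemma Laminar.children_restrictFam_inter (hF : Laminar F) {I : Finset α} (hI : I ∈ F)
    (hmin : IsLeastWithTrace F M I) :
    children (restrictFam F M) (I ∩ M) = restrictFam (children F I) M := by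
  ext X
  rw [mem_children]
  constructor
  · rintro ⟨hX, -, hXI, hpar⟩
    obtain ⟨⟨K, hK, rfl⟩, hKne⟩ := mem_restrictFam.1 hX
    have hKI : K ⊂ I := by
      rcases (hF K hK I hI).subset_or_subset
        (hKne.mono (subset_inter inter_subset_left (hXI.subset.trans inter_subset_left)))
        with hKI | hIK
      · exact hKI.ssubset_of_ne (by rintro rfl; exact hXI.ne rfl)
      · exact absurd (inter_subset_inter_right hIK) hXI.not_subset
    obtain ⟨A, hA, hKA⟩ :=
      hF.exists_mem_children_superset hK (hKne.mono inter_subset_left) hI hKI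
    have hAF := mem_of_mem_children hA
    have hKAM : K ∩ M = A ∩ M := by
      by_contra hne
      refine (hmin.inter_ssubset_inter hAF (ssubset_of_mem_children hA)).not_subset
        (hpar _ ?_ ((inter_subset_inter_right hKA).ssubset_of_ne hne))
      exact mem_restrictFam.2 ⟨⟨A, hAF, rfl⟩, hKne.mono (inter_subset_inter_right hKA)⟩
    rw [hKAM]
    exact mem_restrictFam.2 ⟨⟨A, hA, rfl⟩, hKAM ▸ hKne⟩
  · intro hX
    obtain ⟨⟨A, hA, rfl⟩, hAne⟩ := mem_restrictFam.1 hX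
    have hAF := mem_of_mem_children hA
    refine ⟨mem_restrictFam.2 ⟨⟨A, hAF, rfl⟩, hAne⟩,
      mem_restrictFam.2 ⟨⟨I, hI, rfl⟩, hmin.1⟩,
      hmin.inter_ssubset_inter hAF (ssubset_of_mem_children hA), fun Q hQ hAQ => ?_⟩
    obtain ⟨⟨K, hK, rfl⟩, -⟩ := mem_restrictFam.1 hQ
    rcases (hF A hAF K hK).subset_or_subset
      (hAne.mono (subset_inter inter_subset_left (hAQ.subset.trans inter_subset_left)))
      with hAK | hKA
    · obtain hAK | rfl := hAK.ssubset_or_eq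
      · exact inter_subset_inter_right ((mem_children.1 hA).2.2.2 K hK hAK)
      · exact absurd rfl hAQ.ne
    · exact absurd (inter_subset_inter_right hKA) hAQ.not_subset

end Trace

section Eta

variable {F G : Finset (Finset α)}

lemma eta_eq_zero_of_inter_eq_empty {I J : Finset α} (h : I ∩ J = ∅) : eta F G I J = 0 := by
  rw [eta, card_eq_zero, filter_eq_empty_iff]
  intro X hX
  obtain ⟨⟨A, hA, rfl⟩, hne⟩ := mem_restrictFam.1 hX
  exact absurd (subset_empty.1 (h ▸ inter_subset_inter_right (ssubset_of_mem_children hA).subset))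
    hne.ne_empty

lemma Laminar.eta_eq_zero_of_not_isLeastWithTrace (hF : Laminar F) {M I J : Finset α}
    (hI : I ∈ F) (hJM : J ⊆ M) (h : ¬ IsLeastWithTrace F M I) : eta F G I J = 0 := by
  by_cases hIM : (I ∩ M).Nonempty
  swap
  · exact eta_eq_zero_of_inter_eq_empty
      (subset_empty.1 (not_nonempty_iff_eq_empty.1 hIM ▸ inter_subset_inter_left hJM))
  obtain ⟨K, hK, hKM, hIK⟩ : ∃ K ∈ F, K ∩ M = I ∩ M ∧ ¬ I ⊆ K := by
    simpa [IsLeastWithTrace, hIM] using h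
  have hIMK : I ∩ M ⊆ K := hKM ▸ inter_subset_left
  have hKI : K ⊂ I := by
    rcases (hF K hK I hI).subset_or_subset (hIM.mono (subset_inter hIMK inter_subset_left))
      with hKI | hIK'
    · exact hKI.ssubset_of_ne (by rintro rfl; exact hIK subset_rfl)
    · exact absurd hIK' hIK
  -- every child of `I` meeting `J` is the child `A₀` containing `K`, and `A₀ ⊇ I ∩ J`
  obtain ⟨A₀, hA₀, hKA₀⟩ := hF.exists_mem_children_superset hK (hIM.mono hIMK) hI hKI
  have hIJ : I ∩ J ⊆ A₀ := (inter_subset_inter_left hJM).trans (hIMK.trans hKA₀)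
  rw [eta, card_eq_zero, filter_eq_empty_iff]
  rintro _ hX ⟨_, hY, hcross⟩
  obtain ⟨⟨A, hA, rfl⟩, ⟨x, hx⟩⟩ := mem_restrictFam.1 hX
  obtain ⟨⟨B, hB, rfl⟩, -⟩ := mem_restrictFam.1 hY
  have hxA : x ∈ A := (mem_inter.1 hx).1
  have hxI : x ∈ I ∩ J := inter_subset_inter_right (ssubset_of_mem_children hA).subset hx
  obtain rfl : A = A₀ := by
    by_contra hne
    simpa [hF.inter_eq_empty_of_mem_children hA hA₀ hne] using mem_inter.2 ⟨hxA, hIJ hxI⟩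
  refine hcross (Or.inr (Or.inr fun y hy => ?_))
  have hyIJ : y ∈ I ∩ J :=
    mem_inter.2 ⟨(mem_inter.1 hy).2, (ssubset_of_mem_children hB).subset (mem_inter.1 hy).1⟩
  exact mem_inter.2 ⟨hIJ hyIJ, (mem_inter.1 hyIJ).2⟩

lemma Laminar.eta_restrictFam (hF : Laminar F) (hG : Laminar G) {M I J : Finset α}
    (hI : I ∈ F) (hmin : IsLeastWithTrace F M I) (hJ : J ∈ G) (hJne : J.Nonempty)
    (hJM : J ⊆ M) :
    eta (restrictFam F M) (restrictFam G M) (I ∩ M) J = eta F G I J := by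
  have hJJ : J ∩ M = J := inter_eq_left.2 hJM
  have hJmin : IsLeastWithTrace G M J :=
    ⟨by rwa [hJJ], fun K _ hKM => (hKM.trans hJJ) ▸ inter_subset_left⟩
  have hchG := hG.children_restrictFam_inter hJ hJmin
  rw [hJJ] at hchG
  rw [eta, eta, hF.children_restrictFam_inter hI hmin, restrictFam_restrictFam hJM, hchG,
    restrictFam_restrictFam inter_subset_right,
    restrictFam_inter_of_subset fun C hC => (ssubset_of_mem_children hC).subset.trans hJM]

lemma Laminar.sum_filter_subset_eq_dNav (hF : Laminar F) (hG : Laminar G)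
    (hGne : ∀ J ∈ G, J.Nonempty) {M : Finset α} (hM : M ∈ G) :
    ∑ J ∈ G with J ⊆ M, ∑ I ∈ F, theta (eta F G I J) =
      dNav (restrictFam F M) (restrictFam G M) := by
  have hGM := hG.restrictFam_eq_filter_subset hGne hM
  rw [dNav, sum_comm (s := restrictFam F M)]
  refine sum_congr hGM.symm fun J hJ => ?_
  obtain ⟨hJG, hJM⟩ := mem_filter.1 (hGM ▸ hJ)
  rw [hF.sum_restrictFam, ← sum_filter_of_ne (p := IsLeastWithTrace F M) fun I hI h => ?_]
  · refine sum_congr rfl fun I hI => ?_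
    obtain ⟨hI, hmin⟩ := mem_filter.1 hI
    rw [hF.eta_restrictFam hG hI hmin hJG (hGne J hJG) hJM]
  · by_contra hmin
    exact h (by rw [hF.eta_eq_zero_of_not_isLeastWithTrace hI hJM hmin, theta_zero])

end Eta

section Hierarchy

variable {S : Finset α} {F : Finset (Finset α)}

lemma IsHierarchy.exists_mem_children_mem (hF : IsHierarchy S F) {I : Finset α} {x : α}
    (hI : I ∈ F) (hx : x ∈ I) (hIx : I ≠ {x}) : ∃ A ∈ children F I, x ∈ A := by
  obtain ⟨A, hA, hxA⟩ := hF.laminar.exists_mem_children_superset (hF.2.2.2 x ((hF.1 I hI).1 hx))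
    (singleton_nonempty x) hI ((singleton_subset_iff.2 hx).ssubset_of_ne hIx.symm)
  exact ⟨A, hA, hxA (mem_singleton_self x)⟩

lemma IsHierarchy.union_eq_of_children_eq_pair (hF : IsHierarchy S F) {I A B : Finset α}
    (hI : I ∈ F) (hch : children F I = {A, B}) : A ∪ B = I := by
  have hA : A ∈ children F I := hch ▸ mem_insert_self A {B}
  have hB : B ∈ children F I := hch ▸ mem_insert_of_mem (mem_singleton_self B)
  refine (union_subset (ssubset_of_mem_children hA).subset
    (ssubset_of_mem_children hB).subset).antisymm fun x hx => ?_
  have hIx : I ≠ {x} := by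
    rintro rfl
    exact (hF.1 A (mem_of_mem_children hA)).2.ne_empty
      (ssubset_singleton_iff.1 (ssubset_of_mem_children hA))
  obtain ⟨C, hC, hxC⟩ := hF.exists_mem_children_mem hI hx hIx
  rw [hch, mem_insert, mem_singleton] at hC
  rcases hC with rfl | rfl
  exacts [mem_union_left B hxC, mem_union_right A hxC]

lemma IsHierarchy.inter_eq_empty_of_children_eq_pair (hF : IsHierarchy S F) {I A B : Finset α}
    (hI : I ∈ F) (hch : children F I = {A, B}) : A ∩ B = ∅ := by
  have hA : A ∈ children F I := hch ▸ mem_insert_self A {B}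
  have hB : B ∈ children F I := hch ▸ mem_insert_of_mem (mem_singleton_self B)
  by_cases hAB : A = B
  · have hAI := hF.union_eq_of_children_eq_pair hI hch
    rw [hAB, union_self] at hAI
    exact absurd hAI (ssubset_of_mem_children hB).ne
  · exact hF.laminar.inter_eq_empty_of_mem_children hA hB hAB

lemma IsHierarchy.sum_eq_add_sum_filter_subset {β : Type*} [AddCommMonoid β]
    (hF : IsHierarchy S F) {SL SR : Finset α} (hch : children F S = {SL, SR})
    (f : Finset α → β) :
    ∑ J ∈ F, f J = f S + (∑ J ∈ F with J ⊆ SL, f J + ∑ J ∈ F with J ⊆ SR, f J) := by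
  have hSL : SL ⊂ S := ssubset_of_mem_children (hch ▸ mem_insert_self SL {SR})
  have hSR : SR ⊂ S := ssubset_of_mem_children (hch ▸ mem_insert_of_mem (mem_singleton_self SR))
  have hD := hF.inter_eq_empty_of_children_eq_pair hF.2.2.1 hch
  have hsplit : F = insert S ({J ∈ F | J ⊆ SL} ∪ {J ∈ F | J ⊆ SR}) := by
    ext Q
    simp only [mem_insert, mem_union, mem_filter]
    constructor
    · intro hQ
      by_cases hQS : Q = S
      · exact Or.inl hQS
      obtain ⟨A, hA, hQA⟩ := hF.laminar.exists_mem_children_superset hQ (hF.1 Q hQ).2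
        hF.2.2.1 ((hF.1 Q hQ).1.ssubset_of_ne hQS)
      rw [hch, mem_insert, mem_singleton] at hA
      rcases hA with rfl | rfl
      exacts [Or.inr (Or.inl ⟨hQ, hQA⟩), Or.inr (Or.inr ⟨hQ, hQA⟩)]
    · rintro (rfl | ⟨hQ, -⟩ | ⟨hQ, -⟩)
      exacts [hF.2.2.1, hQ, hQ]
  have hS : S ∉ {J ∈ F | J ⊆ SL} ∪ {J ∈ F | J ⊆ SR} := by
    simp only [mem_union, mem_filter, not_or, not_and]
    exact ⟨fun _ => hSL.not_subset, fun _ => hSR.not_subset⟩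
  have hdisj : Disjoint {J ∈ F | J ⊆ SL} {J ∈ F | J ⊆ SR} := by
    refine disjoint_filter.2 fun Q hQ hQL hQR => ?_
    obtain ⟨x, hx⟩ := (hF.1 Q hQ).2
    simpa [hD] using mem_inter.2 ⟨hQL hx, hQR hx⟩
  rw [sum_congr hsplit fun _ _ => rfl, sum_insert hS, sum_union hdisj]

lemma IsHierarchy.eta_of_children_eq_pair {G : Finset (Finset α)} (hF : IsHierarchy S F)
    (hG : IsHierarchy S G) {SL SR : Finset α} (hch : children G S = {SL, SR}) {I : Finset α}
    (hI : I ∈ F) :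
    eta F G I S = ((children F I).filter
      fun A => ¬ Compatible A SL ∨ ¬ Compatible A SR).card := by
  have hU := hG.union_eq_of_children_eq_pair hG.2.2.1 hch
  have hD := hG.inter_eq_empty_of_children_eq_pair hG.2.2.1 hch
  have hIS := (hF.1 I hI).1
  rw [eta, hch, restrictFam_eq_self fun A hA => hF.1 A (mem_of_mem_children hA)]
  congr 1
  refine filter_congr fun A hA => ?_
  have hAI := ssubset_of_mem_children hA
  have hAS : A ⊆ SL ∪ SR := hU ▸ hAI.subset.trans hIS
  have htrace (X : Finset α) : A ∩ (X ∩ I) = A ∩ X := by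
    rw [inter_comm X I, ← inter_assoc, inter_eq_left.2 hAI.subset]
  have hUI : SL ∩ I ∪ SR ∩ I = I := by
    rw [← union_inter_distrib_right, hU, inter_eq_right.2 hIS]
  have hDI : SL ∩ I ∩ (SR ∩ I) = ∅ :=
    subset_empty.1 (hD ▸ inter_subset_inter inter_subset_left inter_subset_left)
  simp only [exists_mem_restrictFam_not_compatible_iff, exists_mem_insert, mem_singleton,
    exists_eq_left]
  rw [not_compatible_or_not_compatible_iff hDI (hUI.symm ▸ hAI.subset)
      (hUI.symm ▸ hAI.not_subset),
    not_compatible_or_not_compatible_iff hD hAS (hU ▸ fun h => hAI.not_subset (hIS.trans h)),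
    htrace, htrace]

end Hierarchy

theorem dNav_recursion_general (S : Finset α)
    (F G : Finset (Finset α)) (hF : Nondeg S F) (hG : Nondeg S G)
    (SL SR : Finset α)
    (hch : children G S = {SL, SR}) :
    dNav F G =
      (∑ I ∈ F, theta (((children F I).filter
          fun A => ¬ Compatible A SL ∨ ¬ Compatible A SR).card)) +
      dNav (restrictFam F SL) (restrictFam G SL) +
      dNav (restrictFam F SR) (restrictFam G SR) := by
  have hGne : ∀ J ∈ G, J.Nonempty := fun J hJ => (hG.1.1 J hJ).2
  have hSL : SL ∈ G := mem_of_mem_children (hch ▸ mem_insert_self SL {SR})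
  have hSR : SR ∈ G := mem_of_mem_children (hch ▸ mem_insert_of_mem (mem_singleton_self SR))
  rw [dNav, sum_comm, hG.1.sum_eq_add_sum_filter_subset hch,
    hF.1.laminar.sum_filter_subset_eq_dNav hG.1.laminar hGne hSL,
    hF.1.laminar.sum_filter_subset_eq_dNav hG.1.laminar hGne hSR, ← add_assoc]
  congr 2
  exact sum_congr rfl fun I hI => by rw [hF.1.eta_of_children_eq_pair hG.1 hch hI]

theorem dNav_recursion (S : Finset α) (hS : 2 ≤ S.card)
    (F G : Finset (Finset α)) (hF : Nondeg S F) (hG : Nondeg S G)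
    (SL SR : Finset α) (hne : SL ≠ SR)
    (hch : children G S = {SL, SR}) :
    dNav F G =
      (∑ I ∈ F, theta (((children F I).filter
          fun A => ¬ Compatible A SL ∨ ¬ Compatible A SR).card)) +
      dNav (restrictFam F SL) (restrictFam G SL) +
      dNav (restrictFam F SR) (restrictFam G SR) :=
  dNav_recursion_general S F G hF hG SL SR hch

end TreeDist
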